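/- arXiv:2501.00799 — 2 statements merged into one kernel-verified Lean document; each statement's English description precedes it below -/
import Mathlib

section
/- (Laurent–Massart chi-squared upper tail) If X is a chi-squared random variable with M degrees of freedom, then for any δ ∈ (0,1), with probability at least 1 − δ, X ≤ (√M + √(ln(1/δ)))² + ln(1/δ). -/
/-! The moment generating function of `g ^ 2` for a standard Gaussian `g` is `(1 - 2t)^(-1/2)`,
so that of `X = ∑ gᵢ²` is `(1 - 2t)^(-M/2)`. Chernoff's bound at the threshold
`a = (√M + √x)² + x`, with `t` chosen so that `1 - 2t = M / a`, gives
`P(a ≤ X) ≤ exp(-(a - M)/2 + M log(√a / √M))`, and `log w ≤ (w - w⁻¹)/2` together with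
`√M + √x ≤ √a` bounds this exponent by `-x`. -/

open MeasureTheory ProbabilityTheory Real

lemma gaussianPDFReal_zero_one_mul_exp_mul_sq (t x : ℝ) :
    gaussianPDFReal 0 1 x * exp (t * x ^ 2) = (√(2 * π))⁻¹ * exp (-(1 / 2 - t) * x ^ 2) := by
  rw [gaussianPDFReal, mul_assoc, ← exp_add]
  simp only [NNReal.coe_one, mul_one, sub_zero]
  ring_nf

lemma integrable_exp_mul_sq_gaussianReal {t : ℝ} (ht : t < 1 / 2) :
    Integrable (fun x ↦ exp (t * x ^ 2)) (gaussianReal 0 1) := by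
  rw [gaussianReal_of_var_ne_zero 0 one_ne_zero, gaussianPDF_def,
    integrable_withDensity_iff (measurable_gaussianPDFReal 0 1).ennreal_ofReal
      (ae_of_all _ fun _ ↦ ENNReal.ofReal_lt_top)]
  simp_rw [ENNReal.toReal_ofReal (gaussianPDFReal_nonneg 0 1 _), mul_comm (exp _),
    gaussianPDFReal_zero_one_mul_exp_mul_sq]
  exact (integrable_exp_neg_mul_sq (by linarith)).const_mul _

-- For `t ≥ 1 / 2` both sides are junk `0`: the integral diverges and `√` of a negative is `0`.
lemma mgf_sq_gaussianReal (t : ℝ) :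
    mgf (fun x ↦ x ^ 2) (gaussianReal 0 1) t = (√(1 - 2 * t))⁻¹ := by
  rw [mgf, integral_gaussianReal_eq_integral_smul one_ne_zero]
  simp_rw [smul_eq_mul, gaussianPDFReal_zero_one_mul_exp_mul_sq]
  rw [integral_const_mul, integral_gaussian, ← sqrt_inv, ← sqrt_mul (by positivity), ← sqrt_inv]
  congr 1
  field_simp

section SumOfSquares

variable (ι : Type*) [Fintype ι]

lemma exp_mul_sum_sq (t : ℝ) (g : ι → ℝ) : exp (t * ∑ i, g i ^ 2) = ∏ i, exp (t * g i ^ 2) := by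
  rw [Finset.mul_sum, exp_sum]

lemma integrable_exp_mul_sum_sq_gaussian_pi {t : ℝ} (ht : t < 1 / 2) :
    Integrable (fun g : ι → ℝ ↦ exp (t * ∑ i, g i ^ 2))
      (Measure.pi fun _ : ι ↦ gaussianReal 0 1) := by
  simp_rw [exp_mul_sum_sq]
  exact Integrable.fintype_prod fun _ ↦ integrable_exp_mul_sq_gaussianReal ht

lemma mgf_sum_sq_gaussian_pi (t : ℝ) :
    mgf (fun g : ι → ℝ ↦ ∑ i, g i ^ 2) (Measure.pi fun _ : ι ↦ gaussianReal 0 1) t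
      = (√(1 - 2 * t))⁻¹ ^ Fintype.card ι := by
  simp_rw [mgf, exp_mul_sum_sq]
  rw [integral_fintype_prod_eq_pow (fun x ↦ exp (t * x ^ 2)), ← mgf, mgf_sq_gaussianReal]

lemma measureReal_sum_sq_ge_le {t : ℝ} (ht0 : 0 ≤ t) (ht : t < 1 / 2) (a : ℝ) :
    (Measure.pi fun _ : ι ↦ gaussianReal 0 1).real {g | a ≤ ∑ i, g i ^ 2}
      ≤ exp (-t * a) * (√(1 - 2 * t))⁻¹ ^ Fintype.card ι := by
  rw [← mgf_sum_sq_gaussian_pi ι]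
  exact measure_ge_le_exp_mul_mgf a ht0 (integrable_exp_mul_sum_sq_gaussian_pi ι ht)

end SumOfSquares

lemma log_le_sub_inv_div_two {w : ℝ} (hw : 1 ≤ w) : log w ≤ (w - w⁻¹) / 2 := by
  rw [← sinh_log (by linarith)]
  exact self_le_sinh_iff.mpr (log_nonneg hw)

lemma sq_mul_log_sqrt_div_le {b c : ℝ} (hb : 0 < b) (hc : 0 ≤ c) :
    b ^ 2 * log (√((b + c) ^ 2 + c ^ 2) / b) ≤ b * c := by
  set s := √((b + c) ^ 2 + c ^ 2)
  have hs2 : s ^ 2 = (b + c) ^ 2 + c ^ 2 := sq_sqrt (by positivity)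
  have hbcs : b + c ≤ s := le_sqrt_of_sq_le (by nlinarith)
  have hs : 0 < s := by linarith
  calc b ^ 2 * log (s / b) ≤ b ^ 2 * ((s / b - (s / b)⁻¹) / 2) := by
        gcongr
        exact log_le_sub_inv_div_two ((one_le_div hb).mpr (by linarith))
    _ = b * c * ((b + c) / s) := by
        field_simp
        rw [hs2]
        ring
    _ ≤ b * c := by
        apply mul_le_of_le_one_right (by positivity)
        exact (div_le_one hs).mpr hbcs

lemma measureReal_sum_sq_ge_le_exp_neg_sq (ι : Type*) [Fintype ι] [Nonempty ι] {c : ℝ}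
    (hc : 0 ≤ c) :
    (Measure.pi fun _ : ι ↦ gaussianReal 0 1).real
        {g | (√(Fintype.card ι) + c) ^ 2 + c ^ 2 ≤ ∑ i, g i ^ 2} ≤ exp (-c ^ 2) := by
  set b := √(Fintype.card ι)
  set s := √((b + c) ^ 2 + c ^ 2)
  have hb : 0 < b := sqrt_pos.mpr (by exact_mod_cast Fintype.card_pos)
  have hb2 : b ^ 2 = Fintype.card ι := sq_sqrt (Nat.cast_nonneg _)
  have hs2 : s ^ 2 = (b + c) ^ 2 + c ^ 2 := sq_sqrt (by positivity)
  have hbs : b ≤ s := le_sqrt_of_sq_le (by nlinarith)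
  have hs : 0 < s := hb.trans_le hbs
  -- the Chernoff parameter with `1 - 2t = card ι / s ^ 2`
  set t := (1 - (b / s) ^ 2) / 2 with ht_def
  have ht0 : 0 ≤ t := by
    have : (b / s) ^ 2 ≤ 1 := pow_le_one₀ (by positivity) ((div_le_one hs).mpr hbs)
    linarith [ht_def]
  have ht : t < 1 / 2 := by
    have : 0 < (b / s) ^ 2 := by positivity
    linarith [ht_def]
  have hmgf : (√(1 - 2 * t))⁻¹ ^ Fintype.card ι = exp (b ^ 2 * log (s / b)) := by
    rw [show 1 - 2 * t = (b / s) ^ 2 by ring, sqrt_sq (by positivity), inv_div, hb2,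
      exp_nat_mul, exp_log (by positivity)]
  have hts : t * s ^ 2 = b * c + c ^ 2 := by
    rw [ht_def]
    field_simp
    linear_combination hs2
  rw [← hs2]
  calc _ ≤ exp (-t * s ^ 2) * exp (b ^ 2 * log (s / b)) := by
        rw [← hmgf]
        exact measureReal_sum_sq_ge_le ι ht0 ht _
    _ ≤ exp (-c ^ 2) := by
        rw [← exp_add, exp_le_exp]
        nlinarith [sq_mul_log_sqrt_div_le hb hc]

theorem measureReal_sum_sq_gt_le (ι : Type*) [Fintype ι] {x : ℝ} (hx : 0 ≤ x) :
    (Measure.pi fun _ : ι ↦ gaussianReal 0 1).real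
        {g | (√(Fintype.card ι) + √x) ^ 2 + x < ∑ i, g i ^ 2} ≤ exp (-x) := by
  rcases isEmpty_or_nonempty ι with hι | hι
  · have hempty : {g : ι → ℝ | (√(Fintype.card ι) + √x) ^ 2 + x < ∑ i, g i ^ 2} = ∅ :=
      Set.eq_empty_of_forall_notMem fun g hg ↦ by
        simp only [Set.mem_ofPred_eq, Finset.univ_eq_empty, Finset.sum_empty] at hg
        linarith [sq_nonneg (√(Fintype.card ι) + √x)]
    rw [hempty, measureReal_empty]
    positivity
  have hx2 : √x ^ 2 = x := sq_sqrt hx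
  calc _ ≤ (Measure.pi fun _ : ι ↦ gaussianReal 0 1).real
        {g | (√(Fintype.card ι) + √x) ^ 2 + √x ^ 2 ≤ ∑ i, g i ^ 2} := by
        refine measureReal_mono fun g hg ↦ ?_
        simp only [Set.mem_ofPred_eq, hx2] at hg ⊢
        exact hg.le
    _ ≤ exp (-√x ^ 2) := measureReal_sum_sq_ge_le_exp_neg_sq ι (sqrt_nonneg x)
    _ = exp (-x) := by rw [hx2]

theorem laurent_massart_chi_squared_tail (M : ℕ) (δ : ℝ) (hδ0 : 0 < δ) (hδ1 : δ < 1) :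
    (Measure.pi fun _ : Fin M => gaussianReal 0 1)
      {g | ∑ i, (g i) ^ 2 ≤
        (Real.sqrt M + Real.sqrt (Real.log (1 / δ))) ^ 2 + Real.log (1 / δ)}
      ≥ ENNReal.ofReal (1 - δ) := by
  set x := log (1 / δ) with hx_def
  have hx : 0 ≤ x := log_nonneg ((one_le_div hδ0).mpr hδ1.le)
  have hexp : exp (-x) = δ := by rw [hx_def, one_div, log_inv, neg_neg, exp_log hδ0]
  have htail := measureReal_sum_sq_gt_le (Fin M) hx
  rw [Fintype.card_fin, hexp] at htail
  have hcompl : {g : Fin M → ℝ | ∑ i, g i ^ 2 ≤ (√M + √x) ^ 2 + x}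
      = {g | (√M + √x) ^ 2 + x < ∑ i, g i ^ 2}ᶜ := by
    ext g
    simp
  have hmeas : MeasurableSet {g : Fin M → ℝ | (√M + √x) ^ 2 + x < ∑ i, g i ^ 2} :=
    measurableSet_lt measurable_const (by fun_prop)
  rw [ge_iff_le, ENNReal.ofReal_le_iff_le_toReal (measure_ne_top _ _), ← measureReal_def, hcompl,
    probReal_compl_eq_one_sub hmeas]
  linarith
end

section
/- Let d ∈ ℝ^n have nonnegative entries and let y_1,…,y_n be i.i.d. standard normal random variables. Then for any δ ∈ (0,1), with probability at least 1 − δ, Σ_{i=1}^n d_i y_i² ≤ ‖d‖₁ + 2‖d‖₂ √(ln(1/δ)) + 2‖d‖_∞ ln(1/δ). -/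
/-!
Chernoff bound (Laurent–Massart). For `y ~ N(0,1)` and `2c < 1`, `E exp(c y²) = (1 - 2c)^(-1/2)`,
and the series of `-log (1 - x)` gives `-log (1 - x) / 2 ≤ x / 2 + x² / (4 (1 - x))`. By
independence, for `0 ≤ λ` with `2λ‖d‖_∞ < 1` the cumulant generating function of `∑ dᵢ yᵢ²` is
at most `λ‖d‖₁ + λ²‖d‖₂² / (1 - 2λ‖d‖_∞)`. Taking `λ = s / (‖d‖₂ + 2‖d‖_∞ s)` turns the Chernoff
exponent at level `‖d‖₁ + 2‖d‖₂ s + 2‖d‖_∞ s²` into exactly `-s²`; then set `s² = log (1/δ)`.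
-/

open Real MeasureTheory ProbabilityTheory

lemma Real.neg_log_one_sub_le {x : ℝ} (h0 : 0 ≤ x) (h1 : x < 1) :
    -log (1 - x) ≤ x + x ^ 2 / (2 * (1 - x)) := by
  have hseries := hasSum_pow_div_log_of_abs_lt_one (by rwa [abs_of_nonneg h0])
  have hgeom : HasSum (fun n : ℕ => x ^ (n + 1) / 2 + if n = 0 then x / 2 else 0)
      (x / 2 * (1 - x)⁻¹ + x / 2) :=
    (((hasSum_geometric_of_lt_one h0 h1).mul_left (x / 2)).add
      (hasSum_ite_eq 0 (x / 2))).congr_fun fun n => by ring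
  have hterm : ∀ n : ℕ,
      x ^ (n + 1) / (n + 1) ≤ x ^ (n + 1) / 2 + if n = 0 then x / 2 else 0 := by
    rintro (_ | n)
    · simp
    · rw [if_neg n.succ_ne_zero, add_zero]
      gcongr
      norm_cast
      omega
  calc -log (1 - x) ≤ x / 2 * (1 - x)⁻¹ + x / 2 := hasSum_le hterm hseries hgeom
    _ = x + x ^ 2 / (2 * (1 - x)) := by field_simp [(sub_pos.2 h1).ne']; ring

namespace ProbabilityTheory

lemma gaussianPDFReal_zero_one_mul_exp_mul_sq (c x : ℝ) :
    gaussianPDFReal 0 1 x * exp (c * x ^ 2) = (√(2 * π))⁻¹ * exp (-(1 / 2 - c) * x ^ 2) := by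
  rw [gaussianPDFReal, mul_assoc, ← exp_add]
  congr 2
  · simp
  · push_cast; ring

lemma integrable_exp_mul_sq_gaussianReal {c : ℝ} (hc : c < 1 / 2) :
    Integrable (fun x => exp (c * x ^ 2)) (gaussianReal 0 1) := by
  rw [gaussianReal_of_var_ne_zero 0 one_ne_zero,
    integrable_withDensity_iff_integrable_smul' (measurable_gaussianPDF 0 1)
      (Filter.Eventually.of_forall fun _ => gaussianPDF_lt_top)]
  simp only [toReal_gaussianPDF, smul_eq_mul, gaussianPDFReal_zero_one_mul_exp_mul_sq]
  exact (integrable_exp_neg_mul_sq (by linarith)).const_mul _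

lemma mgf_sq_gaussianReal {c : ℝ} (hc : c < 1 / 2) :
    mgf (fun x => x ^ 2) (gaussianReal 0 1) c = (√(1 - 2 * c))⁻¹ := by
  rw [mgf, integral_gaussianReal_eq_integral_smul one_ne_zero]
  simp only [smul_eq_mul, gaussianPDFReal_zero_one_mul_exp_mul_sq]
  rw [integral_const_mul, integral_gaussian, ← sqrt_inv, ← sqrt_inv, ← sqrt_mul (by positivity)]
  have hc' : (1 : ℝ) - 2 * c ≠ 0 := by linarith
  congr 1
  field_simp

variable {Ω : Type*} {mΩ : MeasurableSpace Ω} {P : Measure Ω}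

section SingleVariable

variable {Y : Ω → ℝ}

lemma HasLaw.integrable_exp_mul_const_mul_sq (hY : HasLaw Y (gaussianReal 0 1) P) {d t : ℝ}
    (h : 2 * (t * d) < 1) : Integrable (fun ω => exp (t * (d * Y ω ^ 2))) P := by
  have hint := integrable_exp_mul_sq_gaussianReal (c := t * d) (by linarith)
  rw [← hY.map_eq] at hint
  simpa only [Function.comp_def, mul_assoc] using
    (integrable_map_measure hint.aestronglyMeasurable hY.aemeasurable).1 hint

lemma HasLaw.mgf_sq (hY : HasLaw Y (gaussianReal 0 1) P) {c : ℝ} (hc : c < 1 / 2) :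
    mgf (fun ω => Y ω ^ 2) P c = (√(1 - 2 * c))⁻¹ := by
  rw [← mgf_sq_gaussianReal hc, ← hY.map_eq, mgf_map hY.aemeasurable]
  · rfl
  · rw [hY.map_eq]; fun_prop

lemma HasLaw.cgf_const_mul_sq_le (hY : HasLaw Y (gaussianReal 0 1) P) {d t : ℝ}
    (h0 : 0 ≤ t * d) (h1 : 2 * (t * d) < 1) :
    cgf (fun ω => d * Y ω ^ 2) P t ≤ t * d + (t * d) ^ 2 / (1 - 2 * (t * d)) := by
  have hpos : 0 < 1 - 2 * (t * d) := by linarith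
  rw [cgf, mgf_const_mul, mul_comm d, hY.mgf_sq (by linarith), log_inv, log_sqrt hpos.le]
  have hlog := neg_log_one_sub_le (x := 2 * (t * d)) (by linarith) h1
  calc -(log (1 - 2 * (t * d)) / 2)
      ≤ (2 * (t * d) + (2 * (t * d)) ^ 2 / (2 * (1 - 2 * (t * d)))) / 2 := by linarith
    _ = t * d + (t * d) ^ 2 / (1 - 2 * (t * d)) := by field_simp

end SingleVariable

lemma ofReal_one_sub_le_measure_le_of_measureReal_lt_le [IsProbabilityMeasure P]
    {X : Ω → ℝ} {a ε : ℝ} (h : P.real {ω | a < X ω} ≤ ε) :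
    ENNReal.ofReal (1 - ε) ≤ P {ω | X ω ≤ a} := by
  rw [ENNReal.ofReal_le_iff_le_toReal (measure_ne_top _ _), ← measureReal_def]
  have hcover := measureReal_union_le (μ := P) {ω | X ω ≤ a} {ω | a < X ω}
  rw [Set.eq_univ_of_forall (s := {ω | X ω ≤ a} ∪ {ω | a < X ω}) fun ω => le_or_gt (X ω) a,
    probReal_univ] at hcover
  linarith

variable {ι : Type*} {Y : ι → Ω → ℝ} {d : ι → ℝ}

lemma iIndepFun.const_mul_sq (hind : iIndepFun Y P) (hY : ∀ i, AEMeasurable (Y i) P)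
    (d : ι → ℝ) : iIndepFun (fun i ω => d i * Y i ω ^ 2) P :=
  hind.comp₀ (fun i x => d i * x ^ 2) hY fun _ => by fun_prop

variable [Fintype ι]

lemma integrable_exp_mul_weighted_sum_sq (hY : ∀ i, HasLaw (Y i) (gaussianReal 0 1) P)
    (hind : iIndepFun Y P) {t : ℝ} (ht : ∀ i, 2 * (t * d i) < 1) :
    Integrable (fun ω => exp (t * ∑ i, d i * Y i ω ^ 2)) P := by
  have := hind.isProbabilityMeasure
  rw [← mgf_pos_iff, ← Finset.sum_fn,
    (hind.const_mul_sq (fun i => (hY i).aemeasurable) d).mgf_sum₀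
      fun i => ((hY i).aemeasurable.pow_const 2).const_mul (d i)]
  exact Finset.prod_pos fun i _ => mgf_pos ((hY i).integrable_exp_mul_const_mul_sq (ht i))

lemma cgf_weighted_sum_sq_le (hY : ∀ i, HasLaw (Y i) (gaussianReal 0 1) P)
    (hind : iIndepFun Y P) (hd : ∀ i, 0 ≤ d i) {M : ℝ} (hM : ∀ i, d i ≤ M) {t : ℝ} (ht : 0 ≤ t)
    (htM : 2 * t * M < 1) :
    cgf (fun ω => ∑ i, d i * Y i ω ^ 2) P t ≤
      t * ∑ i, d i + t ^ 2 * (∑ i, d i ^ 2) / (1 - 2 * t * M) := by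
  have htd : ∀ i, 2 * (t * d i) < 1 := fun i => by nlinarith [hM i]
  rw [← Finset.sum_fn, (hind.const_mul_sq (fun i => (hY i).aemeasurable) d).cgf_sum₀
    (fun i => ((hY i).aemeasurable.pow_const 2).const_mul (d i))
    fun i _ => (hY i).integrable_exp_mul_const_mul_sq (htd i)]
  calc ∑ i, cgf (fun ω => d i * Y i ω ^ 2) P t
      ≤ ∑ i, (t * d i + (t * d i) ^ 2 / (1 - 2 * (t * d i))) :=
        Finset.sum_le_sum fun i _ => (hY i).cgf_const_mul_sq_le (mul_nonneg ht (hd i)) (htd i)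
    _ ≤ ∑ i, (t * d i + t ^ 2 * d i ^ 2 / (1 - 2 * t * M)) := by
        gcongr ∑ i, (_ + ?_) with i
        rw [mul_pow, ← mul_assoc]
        gcongr
        exact hM i
    _ = t * ∑ i, d i + t ^ 2 * (∑ i, d i ^ 2) / (1 - 2 * t * M) := by
        rw [Finset.sum_add_distrib, Finset.mul_sum, Finset.mul_sum, Finset.sum_div]

lemma measureReal_weighted_sum_sq_ge_le (hY : ∀ i, HasLaw (Y i) (gaussianReal 0 1) P)
    (hind : iIndepFun Y P) (hd : ∀ i, 0 ≤ d i) {M : ℝ} (hM0 : 0 ≤ M) (hM : ∀ i, d i ≤ M)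
    (hd2 : 0 < ∑ i, d i ^ 2) {s : ℝ} (hs : 0 ≤ s) :
    P.real {ω | ∑ i, d i + 2 * √(∑ i, d i ^ 2) * s + 2 * M * s ^ 2 ≤ ∑ i, d i * Y i ω ^ 2}
      ≤ exp (-s ^ 2) := by
  have := hind.isProbabilityMeasure
  set b := √(∑ i, d i ^ 2)
  have hb : 0 < b := sqrt_pos.2 hd2
  have hb2 : b ^ 2 = ∑ i, d i ^ 2 := sq_sqrt hd2.le
  have hden : 0 < b + 2 * M * s := by positivity
  set t := s / (b + 2 * M * s) with ht_def
  have ht : 0 ≤ t := by positivity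
  have h1tM : 1 - 2 * t * M = b / (b + 2 * M * s) := by rw [ht_def]; field_simp; ring
  have htM : 2 * t * M < 1 := by linarith [show 0 < b / (b + 2 * M * s) by positivity]
  refine (measure_ge_le_exp_cgf _ ht
    (integrable_exp_mul_weighted_sum_sq hY hind fun i => by nlinarith [hM i])).trans ?_
  gcongr
  calc -t * (∑ i, d i + 2 * b * s + 2 * M * s ^ 2) + cgf (fun ω => ∑ i, d i * Y i ω ^ 2) P t
      ≤ -t * (∑ i, d i + 2 * b * s + 2 * M * s ^ 2)
        + (t * ∑ i, d i + t ^ 2 * (∑ i, d i ^ 2) / (1 - 2 * t * M)) := by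
        gcongr
        exact cgf_weighted_sum_sq_le hY hind hd hM ht htM
    _ = -s ^ 2 := by
        rw [← hb2, h1tM, ht_def]
        field_simp
        ring

lemma one_sub_exp_le_measure_weighted_sum_sq_le (hY : ∀ i, HasLaw (Y i) (gaussianReal 0 1) P)
    (hind : iIndepFun Y P) (hd : ∀ i, 0 ≤ d i) {M : ℝ} (hM0 : 0 ≤ M) (hM : ∀ i, d i ≤ M)
    {s : ℝ} (hs : 0 ≤ s) :
    ENNReal.ofReal (1 - exp (-s ^ 2)) ≤
      P {ω | ∑ i, d i * Y i ω ^ 2 ≤ ∑ i, d i + 2 * √(∑ i, d i ^ 2) * s + 2 * M * s ^ 2} := by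
  have := hind.isProbabilityMeasure
  refine ofReal_one_sub_le_measure_le_of_measureReal_lt_le ?_
  rcases (Finset.sum_nonneg fun i _ => sq_nonneg (d i)).eq_or_lt with hd2 | hd2
  · have hd0 : ∀ i, d i = 0 := fun i => by
      simpa using (Finset.sum_eq_zero_iff_of_nonneg fun i _ => sq_nonneg (d i)).1 hd2.symm i
        (Finset.mem_univ i)
    refine (measureReal_mono (s₂ := ∅) fun ω hω => ?_).trans (by simp [(exp_pos _).le])
    exact absurd (by simpa [hd0] using hω)
      (mul_nonneg (mul_nonneg zero_le_two hM0) (sq_nonneg s)).not_gt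
  · refine (measureReal_mono ?_).trans
      (measureReal_weighted_sum_sq_ge_le hY hind hd hM0 hM hd2 hs)
    exact Set.ofPred_subset_ofPred.2 fun ω => le_of_lt

end ProbabilityTheory

theorem weighted_chi_squared_tail (n : ℕ) (d : Fin n → ℝ) (hd : ∀ i, 0 ≤ d i)
    (δ : ℝ) (hδ0 : 0 < δ) (hδ1 : δ < 1) :
    (Measure.pi fun _ : Fin n => gaussianReal 0 1)
      {y | ∑ i, d i * (y i) ^ 2 ≤
        (∑ i, d i) + 2 * Real.sqrt (∑ i, (d i) ^ 2) * Real.sqrt (Real.log (1 / δ))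
          + 2 * (⨆ i, d i) * Real.log (1 / δ)}
      ≥ ENNReal.ofReal (1 - δ) := by
  have hlog : 0 ≤ log (1 / δ) := log_nonneg (by rw [le_div_iff₀ hδ0]; linarith)
  have hexp : exp (-log (1 / δ)) = δ := by rw [one_div, log_inv, neg_neg, exp_log hδ0]
  have h := one_sub_exp_le_measure_weighted_sum_sq_le (Y := fun i (y : Fin n → ℝ) => y i)
    (fun i => (measurePreserving_eval (fun _ => gaussianReal 0 1) i).hasLaw)
    (iIndepFun_pi (X := fun _ => id) fun _ => aemeasurable_id) hd (Real.iSup_nonneg hd)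
    (fun i => le_ciSup (Set.finite_range d).bddAbove i) (sqrt_nonneg (log (1 / δ)))
  rwa [sq_sqrt hlog, hexp] at h
end
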